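/- arXiv:2203.07803 — 6 statements merged into one kernel-verified Lean document; each statement's English description precedes it below -/
import Mathlib

section
/- Suppose M ~ Bin(T, q₀) and conditionally on M = m, G ~ Bin(N, (1-p)^m), where q₀ = (1-p)^k. Then for any nonnegative integer s, the s-th falling moment of G equals C(N,s) · s! · (1 - q₀(1 - (1-p)^s))^T. -/
/-!
Conditionally on `M = m`, the `s`-th falling moment of `G ~ Bin(N, x)` with `x = (1-p)^m` is
`C(N,s) s! x^s`: the identity `C(N,g) C(g,s) = C(N,s) C(N-s,g-s)` pulls the falling factorial out
of the sum, and what remains is the binomial expansion of `(x + (1-x))^(N-s)`. Averaging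
`(1-p)^(s M)` over `M ~ Bin(T, q₀)` is the binomial theorem once more, giving
`(q₀ (1-p)^s + 1 - q₀)^T`.
-/

open Finset

theorem Nat.choose_add_mul_descFactorial (N s j : ℕ) :
    N.choose (s + j) * (s + j).descFactorial s = N.descFactorial s * (N - s).choose j := by
  have h := Nat.choose_mul (n := N) (Nat.le_add_right s j)
  rw [Nat.add_sub_cancel_left] at h
  rw [Nat.descFactorial_eq_factorial_mul_choose, Nat.descFactorial_eq_factorial_mul_choose,
    Nat.mul_left_comm, h, Nat.mul_assoc]

section FallingMoment

variable {R : Type*} [CommRing R]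

theorem sum_choose_mul_pow_mul_pow_mul_descFactorial (N s : ℕ) (x y : R) :
    ∑ g ∈ range (N + 1), (N.choose g : R) * x ^ g * y ^ (N - g) * (g.descFactorial s : R) =
      (N.descFactorial s : R) * x ^ s * (x + y) ^ (N - s) := by
  rcases lt_or_ge N s with hNs | hsN
  · rw [Nat.descFactorial_eq_zero_iff_lt.2 hNs, Nat.cast_zero, zero_mul, zero_mul]
    refine sum_eq_zero fun g hg => ?_
    rw [Nat.descFactorial_eq_zero_iff_lt.2 (by grind), Nat.cast_zero, mul_zero]
  obtain ⟨n, rfl⟩ := Nat.exists_eq_add_of_le hsN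
  have hlow : ∀ g ∈ range s,
      ((s + n).choose g : R) * x ^ g * y ^ (s + n - g) * (g.descFactorial s : R) = 0 := by
    intro g hg
    rw [Nat.descFactorial_eq_zero_iff_lt.2 (mem_range.1 hg), Nat.cast_zero, mul_zero]
  rw [Nat.add_sub_cancel_left, add_assoc, sum_range_add, sum_eq_zero hlow, zero_add, add_pow,
    mul_sum]
  refine sum_congr rfl fun j _ => ?_
  have h := congrArg (Nat.cast (R := R)) (Nat.choose_add_mul_descFactorial (s + n) s j)
  rw [Nat.add_sub_cancel_left, Nat.cast_mul, Nat.cast_mul] at h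
  rw [Nat.add_sub_add_left, pow_add]
  linear_combination x ^ s * x ^ j * y ^ (n - j) * h

theorem sum_binomial_mul_descFactorial (N s : ℕ) (x : R) :
    ∑ g ∈ range (N + 1),
        (N.choose g : R) * x ^ g * (1 - x) ^ (N - g) * (g.descFactorial s : R) =
      (N.choose s : R) * (s.factorial : R) * x ^ s := by
  rw [sum_choose_mul_pow_mul_pow_mul_descFactorial, add_sub_cancel, one_pow, mul_one,
    Nat.descFactorial_eq_factorial_mul_choose, Nat.cast_mul, mul_comm (s.factorial : R)]

end FallingMoment

theorem intruding_falling_moment_general (T N k s : ℕ) (p : ℝ) :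
    ∑ m ∈ Finset.range (T + 1),
      (T.choose m : ℝ) * ((1 - p) ^ k) ^ m * (1 - (1 - p) ^ k) ^ (T - m) *
        (∑ g ∈ Finset.range (N + 1),
          (N.choose g : ℝ) * ((1 - p) ^ m) ^ g * (1 - (1 - p) ^ m) ^ (N - g)
            * (g.descFactorial s : ℝ))
    = (N.choose s : ℝ) * (s.factorial : ℝ) * (1 - (1 - p) ^ k * (1 - (1 - p) ^ s)) ^ T := by
  have hmix : 1 - (1 - p) ^ k * (1 - (1 - p) ^ s) =
      (1 - p) ^ k * (1 - p) ^ s + (1 - (1 - p) ^ k) := by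
    ring
  simp_rw [sum_binomial_mul_descFactorial, hmix, add_pow, mul_sum]
  refine sum_congr rfl fun m _ => ?_
  rw [pow_right_comm _ m s]
  ring

/-- Falling moments of the mixed binomial count of intruding items: if
`M ~ Bin(T, q₀)` with `q₀ = (1-p)^k` and, conditionally on `M = m`,
`G ~ Bin(N, (1-p)^m)`, then `E[(G)_s] = C(N,s) · s! · (1 - q₀(1-(1-p)^s))^T`. -/
theorem intruding_falling_moment (T N k s : ℕ) (p : ℝ) (hp0 : 0 < p) (hp1 : p < 1) :
    ∑ m ∈ Finset.range (T + 1),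
      (T.choose m : ℝ) * ((1 - p) ^ k) ^ m * (1 - (1 - p) ^ k) ^ (T - m) *
        (∑ g ∈ Finset.range (N + 1),
          (N.choose g : ℝ) * ((1 - p) ^ m) ^ g * (1 - (1 - p) ^ m) ^ (N - g)
            * (g.descFactorial s : ℝ))
    = (N.choose s : ℝ) * (s.factorial : ℝ) * (1 - (1 - p) ^ k * (1 - (1 - p) ^ s)) ^ T :=
  intruding_falling_moment_general T N k s p
end

section
/- Under a Bernoulli test design with parameter p, k defectives, and T tests, for two distinct non-defective items i ≠ j, the covariance of their intruding indicators satisfies Cov(G_i, G_j) = (1 - q₀(2p - p²))^T - (1 - q₀·p)^{2T} ≥ 0, where q₀ = (1-p)^k. -/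
open scoped Classical

/-- Expectation of a function of the Bernoulli(p) test matrix. -/
noncomputable def bernoulliMatrixExp (T n : ℕ) (p : ℝ) (f : (Fin T → Fin n → Bool) → ℝ) : ℝ :=
  ∑ X : Fin T → Fin n → Bool,
    (∏ t : Fin T, ∏ j : Fin n, (if X t j then p else 1 - p)) * f X

/-- The indicator that non-defective item `i` is intruding, i.e. appears in no
negative test (every test containing `i` contains a defective item from `K`). -/
noncomputable def intrudingIndicator {T n : ℕ} (K : Finset (Fin n)) (i : Fin n)
    (X : Fin T → Fin n → Bool) : ℝ :=
  if ∀ t : Fin T, X t i = true → ∃ j ∈ K, X t j = true then 1 else 0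

/-- weight of a single Bernoulli entry -/
noncomputable def bw (p : ℝ) (b : Bool) : ℝ := if b then p else 1 - p

/-- sum over a row of the weight times the indicator of coinciding with `b` on `S`. -/
lemma row_ind_sum (n : ℕ) (p : ℝ) (S : Finset (Fin n)) (b : Fin n → Bool) :
    ∑ x : Fin n → Bool, (∏ j, bw p (x j)) * (if ∀ l ∈ S, x l = b l then 1 else 0)
      = ∏ l ∈ S, bw p (b l) := by
  have key : ∀ x : Fin n → Bool,
      (∏ j, bw p (x j)) * (if ∀ l ∈ S, x l = b l then 1 else 0)
        = ∏ j : Fin n, (bw p (x j) * (if j ∈ S then (if x j = b j then (1:ℝ) else 0) else 1)) := by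
    intro x
    rw [Finset.prod_mul_distrib]
    congr 1
    rw [Fintype.prod_ite_mem, Finset.prod_boole]
    congr 1
  simp_rw [key]
  have hps := (Fintype.prod_sum (fun (j : Fin n) (c : Bool) =>
      bw p c * (if j ∈ S then (if c = b j then (1:ℝ) else 0) else 1))).symm
  rw [hps]
  have factor : ∀ j : Fin n,
      (∑ c : Bool, bw p c * (if j ∈ S then (if c = b j then (1:ℝ) else 0) else 1))
        = if j ∈ S then bw p (b j) else 1 := by
    intro j
    rw [Fintype.sum_bool]
    by_cases hj : j ∈ S
    · cases hb : b j <;> simp [hj, hb, bw]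
    · simp [hj, bw]
  simp_rw [factor]
  rw [Fintype.prod_ite_mem]

lemma row_total (n : ℕ) (p : ℝ) :
    ∑ x : Fin n → Bool, (∏ j, bw p (x j)) = 1 := by
  have := row_ind_sum n p ∅ (fun _ => true)
  simpa using this

/-- factorization of the matrix expectation over rows -/
lemma matrix_factor (T n : ℕ) (p : ℝ) (g : (Fin n → Bool) → ℝ) :
    bernoulliMatrixExp T n p (fun X => ∏ t, g (X t))
      = (∑ x : Fin n → Bool, (∏ l, bw p (x l)) * g x) ^ T := by
  unfold bernoulliMatrixExp
  have key : ∀ X : Fin T → Fin n → Bool,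
      (∏ t, ∏ l, (if X t l then p else 1 - p)) * ∏ t, g (X t)
        = ∏ t, ((∏ l, bw p (X t l)) * g (X t)) := by
    intro X
    rw [← Finset.prod_mul_distrib]
    rfl
  simp_rw [key]
  have hps := (Fintype.prod_sum (fun (_ : Fin T) (x : Fin n → Bool) =>
      (∏ l, bw p (x l)) * g x)).symm
  rw [hps, Finset.prod_const, Finset.card_univ, Fintype.card_fin]

section rows

variable {n k : ℕ} {p : ℝ} {K : Finset (Fin n)} {i j : Fin n}

lemma cond_single (hi : i ∉ K) (x : Fin n → Bool) :
    (∀ l ∈ insert i K, x l = decide (l = i)) ↔ (x i = true ∧ ∀ l ∈ K, x l = false) := by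
  rw [Finset.forall_mem_insert]
  constructor
  · rintro ⟨h1, h2⟩
    refine ⟨by simpa using h1, fun l hl => ?_⟩
    rw [h2 l hl]
    exact decide_eq_false fun h => hi (h ▸ hl)
  · rintro ⟨h1, h2⟩
    refine ⟨by simpa using h1, fun l hl => ?_⟩
    rw [h2 l hl]
    exact (decide_eq_false fun h : l = i => hi (h ▸ hl)).symm

lemma cond_pair (hij : i ≠ j) (hi : i ∉ K) (hj : j ∉ K) (x : Fin n → Bool) :
    (∀ l ∈ insert i (insert j K), x l = (decide (l = i) || decide (l = j)))
      ↔ (x i = true ∧ x j = true ∧ ∀ l ∈ K, x l = false) := by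
  rw [Finset.forall_mem_insert, Finset.forall_mem_insert]
  have hdi : ∀ l ∈ K, decide (l = i) = false := fun l hl => decide_eq_false fun h => hi (h ▸ hl)
  have hdj : ∀ l ∈ K, decide (l = j) = false := fun l hl => decide_eq_false fun h => hj (h ▸ hl)
  have hji : decide (j = i) = false := decide_eq_false fun h => hij h.symm
  constructor
  · rintro ⟨h1, h2, h3⟩
    refine ⟨by simpa using h1, by simpa [hji] using h2, fun l hl => ?_⟩
    rw [h3 l hl, hdi l hl, hdj l hl]
    rfl
  · rintro ⟨h1, h2, h3⟩
    refine ⟨by simpa using h1, by simpa [hji] using h2, fun l hl => ?_⟩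
    rw [h3 l hl, hdi l hl, hdj l hl]
    rfl

lemma cond_P (x : Fin n → Bool) :
    (x i = true → ∃ l ∈ K, x l = true) ↔ ¬ (x i = true ∧ ∀ l ∈ K, x l = false) := by
  constructor
  · rintro h ⟨hxi, hc⟩
    obtain ⟨l, hl, hxl⟩ := h hxi
    rw [hc l hl] at hxl
    exact Bool.false_ne_true hxl
  · intro h hxi
    by_contra hne
    push_neg at hne
    exact h ⟨hxi, fun l hl => by simpa using hne l hl⟩

lemma prod_K_false (hK : K.card = k) {f : Fin n → Bool} (hf : ∀ l ∈ K, f l = false) :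
    ∏ l ∈ K, bw p (f l) = (1 - p) ^ k := by
  rw [Finset.prod_congr rfl (fun l hl => by rw [hf l hl]), Finset.prod_const, hK]
  rfl

lemma row_single (hK : K.card = k) (hi : i ∉ K) :
    ∑ x : Fin n → Bool, (∏ l, bw p (x l)) *
        (if x i = true → ∃ l ∈ K, x l = true then 1 else 0)
      = 1 - (1 - p) ^ k * p := by
  have hpt : ∀ x : Fin n → Bool,
      (if x i = true → ∃ l ∈ K, x l = true then (1:ℝ) else 0)
        = 1 - (if ∀ l ∈ insert i K, x l = decide (l = i) then 1 else 0) := by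
    intro x
    by_cases hA : ∀ l ∈ insert i K, x l = decide (l = i)
    · rw [if_pos hA, if_neg (by rw [cond_P]; push_neg; simpa using (cond_single hi x).mp hA)]
      norm_num
    · rw [if_neg hA, if_pos (by rw [cond_P]; exact fun h => hA ((cond_single hi x).mpr h))]
      norm_num
  simp_rw [hpt, mul_sub, mul_one]
  rw [Finset.sum_sub_distrib, row_total, row_ind_sum]
  rw [Finset.prod_insert hi]
  rw [prod_K_false hK (fun l hl => decide_eq_false fun h : l = i => hi (h ▸ hl))]
  simp [bw]
  ring

lemma row_pair (hK : K.card = k) (hij : i ≠ j) (hi : i ∉ K) (hj : j ∉ K) :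
    ∑ x : Fin n → Bool, (∏ l, bw p (x l)) *
        (if (x i = true → ∃ l ∈ K, x l = true) ∧ (x j = true → ∃ l ∈ K, x l = true)
          then 1 else 0)
      = 1 - (1 - p) ^ k * (2 * p - p ^ 2) := by
  have hij' : i ∉ insert j K := by simp [hij, hi]
  have hpt : ∀ x : Fin n → Bool,
      (if (x i = true → ∃ l ∈ K, x l = true) ∧ (x j = true → ∃ l ∈ K, x l = true)
          then (1:ℝ) else 0)
        = 1 - (if ∀ l ∈ insert i K, x l = decide (l = i) then 1 else 0)
            - (if ∀ l ∈ insert j K, x l = decide (l = j) then 1 else 0)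
            + (if ∀ l ∈ insert i (insert j K), x l = (decide (l = i) || decide (l = j))
                then 1 else 0) := by
    intro x
    rw [if_congr (and_congr (cond_P x) (cond_P x)) rfl rfl,
        if_congr (cond_single hi x) rfl rfl, if_congr (cond_single hj x) rfl rfl,
        if_congr (cond_pair hij hi hj x) rfl rfl]
    by_cases hc : ∀ l ∈ K, x l = false
    · have hcc : ¬ ∃ l ∈ K, x l = true := by
        push_neg
        intro l hl
        simp [hc l hl]
      simp only [eq_true hc, and_true]
      by_cases ha : x i = true <;> by_cases hb : x j = true <;>
        simp [ha, hb]
    · simp only [eq_false hc, and_false]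
      norm_num
  simp only [hpt, mul_sub, mul_add, mul_one]
  rw [Finset.sum_add_distrib, Finset.sum_sub_distrib, Finset.sum_sub_distrib, row_total,
      row_ind_sum, row_ind_sum, row_ind_sum]
  rw [Finset.prod_insert hi, Finset.prod_insert hj, Finset.prod_insert hij',
      Finset.prod_insert hj]
  rw [prod_K_false hK (fun l hl => decide_eq_false fun h : l = i => hi (h ▸ hl)),
      prod_K_false hK (fun l hl => decide_eq_false fun h : l = j => hj (h ▸ hl)),
      prod_K_false (p := p) hK (f := fun l => decide (l = i) || decide (l = j))
        (fun l hl => by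
          show (decide (l = i) || decide (l = j)) = false
          rw [decide_eq_false fun h : l = i => hi (h ▸ hl),
              decide_eq_false fun h : l = j => hj (h ▸ hl)]
          rfl)]
  have h1 : decide (i = i) = true := by simp
  have h2 : decide (j = j) = true := by simp
  have h3 : decide (j = i) = false := decide_eq_false fun h => hij h.symm
  rw [h1, h2, h3, Bool.true_or, Bool.false_or]
  show 1 - p * (1 - p) ^ k - p * (1 - p) ^ k + p * (p * (1 - p) ^ k) = _
  ring

end rows

/-- Under a Bernoulli test design with parameter `p`, `k` defectives and `T` tests,
for distinct non-defective items `i ≠ j` the covariance of the intruding indicators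
is `(1 - q₀(2p - p²))^T - (1 - q₀ p)^{2T} ≥ 0`, where `q₀ = (1-p)^k`. -/
theorem intruding_covariance (T n k : ℕ) (p : ℝ) (hp0 : 0 < p) (hp1 : p < 1)
    (K : Finset (Fin n)) (hK : K.card = k) (i j : Fin n) (hij : i ≠ j)
    (hi : i ∉ K) (hj : j ∉ K) :
    bernoulliMatrixExp T n p (fun X => intrudingIndicator K i X * intrudingIndicator K j X)
      - bernoulliMatrixExp T n p (intrudingIndicator K i)
          * bernoulliMatrixExp T n p (intrudingIndicator K j)
      = (1 - (1 - p) ^ k * (2 * p - p ^ 2)) ^ T - (1 - (1 - p) ^ k * p) ^ (2 * T) ∧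
    (0 : ℝ) ≤ (1 - (1 - p) ^ k * (2 * p - p ^ 2)) ^ T - (1 - (1 - p) ^ k * p) ^ (2 * T) := by
  have hind : ∀ (i : Fin n) (X : Fin T → Fin n → Bool),
      intrudingIndicator K i X
        = ∏ t, (if (X t) i = true → ∃ l ∈ K, (X t) l = true then (1:ℝ) else 0) := by
    intro i X
    rw [intrudingIndicator, Fintype.prod_boole]
    congr 1
  have hsingle : ∀ i : Fin n, i ∉ K →
      bernoulliMatrixExp T n p (intrudingIndicator K i) = (1 - (1 - p) ^ k * p) ^ T := by
    intro i hi
    have : intrudingIndicator (T := T) K i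
        = fun X => ∏ t, (if (X t) i = true → ∃ l ∈ K, (X t) l = true then (1:ℝ) else 0) :=
      funext (hind i)
    rw [this]
    exact (matrix_factor T n p
      (fun x => if x i = true → ∃ l ∈ K, x l = true then (1:ℝ) else 0)).trans
      (by rw [row_single hK hi])
  have hpair :
      bernoulliMatrixExp T n p
          (fun X => intrudingIndicator K i X * intrudingIndicator K j X)
        = (1 - (1 - p) ^ k * (2 * p - p ^ 2)) ^ T := by
    have hfun : (fun X : Fin T → Fin n → Bool =>
        intrudingIndicator K i X * intrudingIndicator K j X)
        = fun X => ∏ t, (if ((X t) i = true → ∃ l ∈ K, (X t) l = true)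
            ∧ ((X t) j = true → ∃ l ∈ K, (X t) l = true) then (1:ℝ) else 0) := by
      funext X
      rw [hind i X, hind j X, ← Finset.prod_mul_distrib]
      refine Finset.prod_congr rfl fun t _ => ?_
      by_cases h1 : (X t) i = true → ∃ l ∈ K, (X t) l = true <;>
        by_cases h2 : (X t) j = true → ∃ l ∈ K, (X t) l = true
      · rw [if_pos h1, if_pos h2, if_pos ⟨h1, h2⟩]; norm_num
      · rw [if_pos h1, if_neg h2, if_neg (fun h => h2 h.2)]; norm_num
      · rw [if_neg h1, if_pos h2, if_neg (fun h => h1 h.1)]; norm_num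
      · rw [if_neg h1, if_neg h2, if_neg (fun h => h1 h.1)]; norm_num
    rw [hfun]
    exact (matrix_factor T n p
      (fun x => if (x i = true → ∃ l ∈ K, x l = true) ∧ (x j = true → ∃ l ∈ K, x l = true)
        then (1:ℝ) else 0)).trans (by rw [row_pair hK hij hi hj])
  rw [hpair, hsingle i hi, hsingle j hj]
  have hq0 : (0:ℝ) ≤ (1 - p) ^ k := pow_nonneg (by linarith) k
  have hq1 : (1 - p) ^ k ≤ 1 := pow_le_one₀ (by linarith) (by linarith)
  have hpowmul : (1 - (1 - p) ^ k * p) ^ (2 * T) = ((1 - (1 - p) ^ k * p) ^ 2) ^ T :=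
    pow_mul _ 2 T
  have hTT : (1 - (1 - p) ^ k * p) ^ T * (1 - (1 - p) ^ k * p) ^ T
      = (1 - (1 - p) ^ k * p) ^ (2 * T) := by
    rw [← pow_add, two_mul]
  constructor
  · rw [hTT]
  · rw [hpowmul, sub_nonneg]
    refine pow_le_pow_left₀ (sq_nonneg _) ?_ T
    nlinarith [mul_nonneg (mul_nonneg hq0 (sq_nonneg p)) (sub_nonneg.2 hq1)]
end

section
/- Define R(s) = (1 - q₀(1 - (1-p)^s)) / (1 - p·q₀)^s for p, q₀ ∈ (0,1) and nonnegative integers s. Then R(s+1) - R(s) = p·q₀·(1-q₀)·(1 - (1-p)^s)·(1 - p·q₀)^{-s-1}, and hence R is nondecreasing in s with R(s) ≥ R(0) = 1. -/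
/-!
Writing `R s = N s / t ^ s` with `t = 1 - p q₀`, the increment is `(N (s+1) - t N s) / t ^ (s+1)`,
and the numerator `N (s+1) - t N s` collapses to `p q₀ (1 - q₀) (1 - (1-p)^s)`, which is
nonnegative because `0 ≤ (1-p)^s ≤ 1`.
-/

theorem div_pow_succ_sub_div_pow {K : Type*} [Field K] {t : K} (ht : t ≠ 0) (a b : K) (s : ℕ) :
    a / t ^ (s + 1) - b / t ^ s = (a - t * b) * t ^ (-(s : ℤ) - 1) := by
  rw [show -(s : ℤ) - 1 = -((s + 1 : ℕ) : ℤ) by push_cast; ring, zpow_neg, zpow_natCast]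
  field_simp
  ring

theorem moment_numerator_succ_sub {R : Type*} [CommRing R] (p q : R) (s : ℕ) :
    (1 - q * (1 - (1 - p) ^ (s + 1))) - (1 - p * q) * (1 - q * (1 - (1 - p) ^ s))
      = p * q * (1 - q) * (1 - (1 - p) ^ s) := by
  ring

theorem moment_increment_nonneg {p q : ℝ} (hp0 : 0 ≤ p) (hp1 : p ≤ 1) (hq0 : 0 ≤ q) (hq1 : q ≤ 1)
    (s : ℕ) :
    0 ≤ p * q * (1 - q) * (1 - (1 - p) ^ s) * (1 - p * q) ^ (-(s : ℤ) - 1) := by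
  have hpow : (1 - p) ^ s ≤ 1 := pow_le_one₀ (by linarith) (by linarith)
  exact mul_nonneg (mul_nonneg (mul_nonneg (mul_nonneg hp0 hq0) (sub_nonneg.2 hq1))
    (sub_nonneg.2 hpow)) (zpow_nonneg (sub_nonneg.2 (mul_le_one₀ hp1 hq0 hq1)) _)

/-- For `p, q₀ ∈ (0,1)` let `R(s) = (1 - q₀(1-(1-p)^s))/(1 - p q₀)^s`. Then
`R(s+1) - R(s) = p q₀ (1-q₀)(1-(1-p)^s)(1-p q₀)^{-s-1}`, so `R` is nondecreasing
in `s` with `R(s) ≥ R(0) = 1`. -/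
theorem moment_ratio_increasing (p q₀ : ℝ) (hp0 : 0 < p) (hp1 : p < 1)
    (hq0 : 0 < q₀) (hq1 : q₀ < 1)
    (R : ℕ → ℝ) (hR : ∀ s, R s = (1 - q₀ * (1 - (1 - p) ^ s)) / (1 - p * q₀) ^ s) :
    (∀ s : ℕ, R (s + 1) - R s
        = p * q₀ * (1 - q₀) * (1 - (1 - p) ^ s) * (1 - p * q₀) ^ (-(s : ℤ) - 1)) ∧
    Monotone R ∧ R 0 = 1 ∧ ∀ s : ℕ, 1 ≤ R s := by
  have ht : 0 < 1 - p * q₀ := by nlinarith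
  have hdiff : ∀ s : ℕ, R (s + 1) - R s
      = p * q₀ * (1 - q₀) * (1 - (1 - p) ^ s) * (1 - p * q₀) ^ (-(s : ℤ) - 1) := by
    intro s
    rw [hR, hR, div_pow_succ_sub_div_pow ht.ne', moment_numerator_succ_sub]
  have hmono : Monotone R := monotone_nat_of_le_succ fun s ↦ sub_nonneg.1 <| by
    rw [hdiff]
    exact moment_increment_nonneg hp0.le hp1.le hq0.le hq1.le s
  have h0 : R 0 = 1 := by simp [hR]
  exact ⟨hdiff, hmono, h0, fun s ↦ h0 ▸ hmono s.zero_le⟩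
end

section
/- Let r ≥ 1, q ∈ (0,1), and let n, k, s be nonnegative integers with n > k. Define the falling-moment quantities F_geom(s) = s!(r(1-q)/q)^s, F_NB(s) = (Γ(s+r)/Γ(r))((1-q)/q)^s, F_Po(s) = (r(1-q)/q)^s, and F_Bin(s) = (r(1-q)/q)^s · C(n-k,s)·s!/(n-k)^s. Then F_geom(s) ≥ F_NB(s) ≥ F_Po(s) ≥ F_Bin(s) for all integers s ≥ 1. -/
lemma prod_range_add_one_fact (s : ℕ) :
    ∏ i ∈ Finset.range s, ((i:ℝ) + 1) = (s.factorial : ℝ) := by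
  induction s with
  | zero => simp
  | succ m ih => rw [Finset.prod_range_succ, ih, Nat.factorial_succ]; push_cast; ring

lemma gamma_nat_add_prod (r : ℝ) (hr : 0 < r) (s : ℕ) :
    Real.Gamma (s + r) = Real.Gamma r * ∏ i ∈ Finset.range s, (r + i) := by
  induction s with
  | zero => simp
  | succ m ih =>
      have h1 : ((m + 1 : ℕ) : ℝ) + r = (↑m + r) + 1 := by push_cast; ring
      have h2 : (↑m + r) ≠ 0 := by positivity
      rw [h1, Real.Gamma_add_one h2, ih, Finset.prod_range_succ]
      ring

/-- Comparison of falling moments of mean-matched distributions: with mean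
`r(1-q)/q`, for `r ≥ 1`, `q ∈ (0,1)`, `n > k` and `s ≥ 1`, the `s`-th falling
moments of the geometric, negative binomial NB(r,q), Poisson and binomial
distributions satisfy `F_geom(s) ≥ F_NB(s) ≥ F_Po(s) ≥ F_Bin(s)`. -/
theorem falling_moment_comparison (r q : ℝ) (hr : 1 ≤ r) (hq0 : 0 < q) (hq1 : q < 1)
    (n k s : ℕ) (hnk : k < n) (hs : 1 ≤ s) :
    (Real.Gamma (s + r) / Real.Gamma r) * ((1 - q) / q) ^ s
        ≤ (s.factorial : ℝ) * (r * (1 - q) / q) ^ s ∧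
    (r * (1 - q) / q) ^ s ≤ (Real.Gamma (s + r) / Real.Gamma r) * ((1 - q) / q) ^ s ∧
    (r * (1 - q) / q) ^ s * (((n - k).choose s : ℝ) * (s.factorial : ℝ) / ((n - k : ℕ) : ℝ) ^ s)
        ≤ (r * (1 - q) / q) ^ s := by
  have hr0 : (0:ℝ) < r := lt_of_lt_of_le one_pos hr
  have hG : Real.Gamma r > 0 := Real.Gamma_pos_of_pos hr0
  have hratio : Real.Gamma (s + r) / Real.Gamma r = ∏ i ∈ Finset.range s, (r + i) := by
    rw [gamma_nat_add_prod r hr0 s, mul_div_assoc]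
    field_simp
  have hp : (0:ℝ) ≤ (1 - q) / q := div_nonneg (by linarith) hq0.le
  have hpow : (0:ℝ) ≤ ((1 - q) / q) ^ s := pow_nonneg hp s
  have hx : (r * (1 - q) / q) ^ s = r ^ s * ((1 - q) / q) ^ s := by
    rw [← mul_pow]; ring_nf
  refine ⟨?_, ?_, ?_⟩
  · rw [hratio, hx, ← mul_assoc]
    apply mul_le_mul_of_nonneg_right _ hpow
    calc ∏ i ∈ Finset.range s, (r + i)
        ≤ ∏ i ∈ Finset.range s, (r * (i + 1)) := by
          apply Finset.prod_le_prod
          · intro i _; positivity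
          · intro i _
            have : (i:ℝ) ≤ r * i := le_mul_of_one_le_left (Nat.cast_nonneg i) hr
            nlinarith
      _ = (s.factorial : ℝ) * r ^ s := by
          rw [Finset.prod_mul_distrib, Finset.prod_const, Finset.card_range]
          rw [prod_range_add_one_fact]; ring
  · rw [hratio, hx]
    apply mul_le_mul_of_nonneg_right _ hpow
    calc r ^ s = ∏ i ∈ Finset.range s, r := by simp
      _ ≤ ∏ i ∈ Finset.range s, (r + i) := by
          apply Finset.prod_le_prod
          · intro i _; positivity
          · intro i _; simp [Nat.cast_nonneg]
  · have hxnn : (0:ℝ) ≤ (r * (1 - q) / q) ^ s := by rw [hx]; exact mul_nonneg (pow_nonneg hr0.le s) hpow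
    have hm : 0 < n - k := Nat.sub_pos_of_lt hnk
    set m := n - k
    have hfac : ((m.choose s : ℝ) * (s.factorial : ℝ) / ((m:ℕ):ℝ) ^ s) ≤ 1 := by
      rw [div_le_one (by positivity)]
      have h1 : (m.choose s) * s.factorial = m.descFactorial s := by
        rw [Nat.descFactorial_eq_factorial_mul_choose]; ring
      have h2 : m.descFactorial s ≤ m ^ s := Nat.descFactorial_le_pow m s
      calc (m.choose s : ℝ) * (s.factorial : ℝ) = ((m.choose s * s.factorial : ℕ) : ℝ) := by
            push_cast; ring
        _ ≤ ((m ^ s : ℕ) : ℝ) := by exact_mod_cast h1 ▸ h2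
        _ = ((m:ℕ):ℝ) ^ s := by push_cast; ring
    calc (r * (1 - q) / q) ^ s * (((m).choose s : ℝ) * (s.factorial : ℝ) / ((m : ℕ) : ℝ) ^ s)
        ≤ (r * (1 - q) / q) ^ s * 1 := mul_le_mul_of_nonneg_left hfac hxnn
      _ = (r * (1 - q) / q) ^ s := mul_one _
end

section
/- The function v(r) = e^r · Γ(r+1) / (r+1)^{r+1} satisfies v(0) = 1 and is nonincreasing on [0,∞); in particular v(r) ≤ 1 for all r ≥ 0. -/
open Real MeasureTheory Set

private noncomputable def vker (r s : ℝ) : ℝ :=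
  Real.exp (r * (1 + Real.log s - s)) * Real.exp (-s)

private lemma vker_eq {r s : ℝ} (h1 : (0:ℝ) < r + 1) (hs0 : (0:ℝ) < s) :
    vker r s = (Real.exp r * (r+1) ^ (-r : ℝ)) *
      (Real.exp (-((r+1)*s)) * ((r+1)*s) ^ r) := by
  have hls : Real.log ((r+1)*s) = Real.log (r+1) + Real.log s :=
    Real.log_mul h1.ne' hs0.ne'
  rw [vker, Real.rpow_def_of_pos (mul_pos h1 hs0), Real.rpow_def_of_pos h1, hls]
  simp only [← Real.exp_add]
  exact congrArg Real.exp (by ring)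

private lemma vker_integrable {r : ℝ} (hr : 0 ≤ r) :
    IntegrableOn (vker r) (Ioi 0) := by
  have h1 : (0:ℝ) < r + 1 := by linarith
  have hG : IntegrableOn (fun x : ℝ => Real.exp (-x) * x ^ r) (Ioi 0) := by
    simpa using Real.GammaIntegral_convergent h1
  have hS : IntegrableOn (fun s : ℝ => Real.exp (-((r+1)*s)) * ((r+1)*s) ^ r) (Ioi 0) := by
    have := (integrableOn_Ioi_comp_mul_left_iff
      (fun x => Real.exp (-x) * x ^ r) 0 h1).mpr (by simpa [mul_zero] using hG)
    simpa [mul_zero] using this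
  have h2 : IntegrableOn (fun s : ℝ => (Real.exp r * (r+1) ^ (-r : ℝ)) *
      (Real.exp (-((r+1)*s)) * ((r+1)*s) ^ r)) (Ioi 0) := hS.const_mul _
  exact h2.congr_fun (fun s hs => (vker_eq h1 hs).symm) measurableSet_Ioi

private lemma v_eq_integral {r : ℝ} (hr : 0 ≤ r) :
    Real.exp r * Real.Gamma (r + 1) / (r + 1) ^ (r + 1 : ℝ)
      = ∫ s in Ioi 0, vker r s := by
  have h1 : (0:ℝ) < r + 1 := by linarith
  have hG : Real.Gamma (r + 1) = ∫ x in Ioi 0, Real.exp (-x) * x ^ r := by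
    rw [Real.Gamma_eq_integral h1]; simp
  have hsub : (∫ s in Ioi 0, Real.exp (-((r+1)*s)) * ((r+1)*s) ^ r)
      = (r+1)⁻¹ * Real.Gamma (r + 1) := by
    have h := integral_comp_mul_left_Ioi (fun x => Real.exp (-x) * x ^ r) 0 h1
    rw [mul_zero] at h
    rw [hG, ← smul_eq_mul, ← h]
  have key : (∫ s in Ioi 0, vker r s)
      = ∫ s in Ioi 0, (Real.exp r * (r+1) ^ (-r : ℝ)) *
          (Real.exp (-((r+1)*s)) * ((r+1)*s) ^ r) :=
    setIntegral_congr_fun measurableSet_Ioi (fun s hs => vker_eq h1 hs)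
  rw [key, integral_const_mul, hsub]
  rw [Real.rpow_neg h1.le, show (r + 1 : ℝ) = (r : ℝ) + 1 from rfl,
    Real.rpow_add h1 r 1, Real.rpow_one]
  have hp : (0:ℝ) < (r+1) ^ (r : ℝ) := Real.rpow_pos_of_pos h1 _
  field_simp

/-- The function `v(r) = e^r Γ(r+1)/(r+1)^{r+1}` satisfies `v(0) = 1` and is
nonincreasing on `[0, ∞)`; in particular `v(r) ≤ 1` for all `r ≥ 0`. -/
theorem gamma_ratio_le_one
    (v : ℝ → ℝ)
    (hv : ∀ r : ℝ, v r = Real.exp r * Real.Gamma (r + 1) / (r + 1) ^ (r + 1 : ℝ)) :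
    v 0 = 1 ∧ AntitoneOn v (Set.Ici 0) ∧ ∀ r : ℝ, 0 ≤ r → v r ≤ 1 := by
  have hv0 : v 0 = 1 := by
    rw [hv 0, v_eq_integral le_rfl]
    have : ∀ s ∈ Ioi (0:ℝ), vker 0 s = Real.exp (-s) := by
      intro s _; simp [vker]
    rw [setIntegral_congr_fun measurableSet_Ioi this, integral_exp_neg_Ioi_zero]
  have hanti : AntitoneOn v (Set.Ici 0) := by
    intro a ha b hb hab
    rw [hv a, hv b, v_eq_integral ha, v_eq_integral hb]
    refine setIntegral_mono_on (vker_integrable hb) (vker_integrable ha)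
      measurableSet_Ioi (fun s hs => ?_)
    have hs0 : (0:ℝ) < s := hs
    have hlog : 1 + Real.log s - s ≤ 0 := by
      have := Real.log_le_sub_one_of_pos hs0
      linarith
    unfold vker
    exact mul_le_mul_of_nonneg_right
      (Real.exp_le_exp.mpr (mul_le_mul_of_nonpos_right hab hlog))
      (Real.exp_pos _).le
  exact ⟨hv0, hanti, fun r hr => hv0 ▸ hanti (le_refl (0:ℝ)) hr hr⟩
end

section
/- Let η ~ Γ(r, rK) with shape r > 0 and rate rK, K > 0. Then ∫₁^∞ P(η > x) dx ≤ e^{r+1} · K^r · e^{-rK}, provided K > 1 (so that 1 > shape/rate after any required threshold conditions; specifically provided 1 > 1/K, i.e. rK > r). -/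
/-! By the layer-cake formula the integrated tail is `E (η - 1)₊`. For `x ≥ 0` we have
`(x - 1)₊ ≤ x e^{(b - r)(x - 1)}` with `b = rK`, and `x e^{(b - r) x}` times the `Γ(r, b)` density
is `(b / r)^r` times the `Γ(r + 1, r)` density, which integrates to one. Hence
`E (η - 1)₊ ≤ K^r e^{r - rK}`, which is `e⁻¹` times the claimed bound. -/

open ProbabilityTheory MeasureTheory Set Real

theorem lintegral_measure_Ioi_eq_lintegral_ofReal_sub (μ : Measure ℝ) (a : ℝ) :
    ∫⁻ x in Ioi a, μ (Ioi x) = ∫⁻ y, ENNReal.ofReal (y - a) ∂μ := by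
  have hshift : ∫⁻ x in Ioi a, μ (Ioi x) = ∫⁻ t in Ioi 0, μ (Ioi (a + t)) := by
    have h := (measurePreserving_add_left volume a).setLIntegral_comp_preimage_emb
      (MeasurableEquiv.addLeft a).measurableEmbedding (fun x => μ (Ioi x)) (Ioi a)
    rw [preimage_const_add_Ioi, sub_self] at h
    exact h.symm
  have hcake := lintegral_eq_lintegral_meas_lt μ (f := fun y => max (y - a) 0)
    (ae_of_all _ fun _ => le_max_right _ _) (by fun_prop)
  simp only [ENNReal.ofReal_max, ENNReal.ofReal_zero, zero_le, max_eq_left] at hcake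
  rw [hshift, hcake]
  refine setLIntegral_congr_fun measurableSet_Ioi fun t (ht : 0 < t) => congrArg μ ?_
  ext y
  simp only [mem_Ioi, mem_ofPred_eq, lt_max_iff]
  constructor
  · intro h; left; linarith
  · rintro (h | h) <;> linarith

theorem gammaPDFReal_mul_exp (p : ℝ) {b c : ℝ} (hb : 0 ≤ b) (hc : 0 < c) (x : ℝ) :
    gammaPDFReal p b x * exp ((b - c) * x) = (b / c) ^ p * gammaPDFReal p c x := by
  unfold gammaPDFReal
  split_ifs
  · have hexp : exp (-(b * x)) * exp ((b - c) * x) = exp (-(c * x)) := by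
      rw [← exp_add]; ring_nf
    have hcp : 0 < c ^ p := rpow_pos_of_pos hc p
    rw [mul_assoc _ (exp _), hexp, div_rpow hb hc.le]
    field_simp
  · simp

theorem mul_gammaPDFReal {p c : ℝ} (hp : 0 < p) (hc : 0 < c) (x : ℝ) :
    x * gammaPDFReal p c x = p / c * gammaPDFReal (p + 1) c x := by
  unfold gammaPDFReal
  split_ifs with hx
  · have hpow : x ^ (p + 1 - 1) = x ^ (p - 1) * x := by
      rw [add_sub_cancel_right, ← rpow_add_one' hx (by linarith), sub_add_cancel]
    rw [Gamma_add_one hp.ne', rpow_add_one hc.ne', hpow]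
    have := Gamma_pos_of_pos hp
    field_simp
  · simp

theorem gammaPDFReal_mul_sub_one_le {r b : ℝ} (hr : 0 < r) (hrb : r ≤ b) (x : ℝ) :
    gammaPDFReal r b x * (x - 1) ≤ (b / r) ^ r * exp (r - b) * gammaPDFReal (r + 1) r x := by
  have hb : 0 < b := hr.trans_le hrb
  rcases lt_or_ge x 0 with hx | hx
  · simp [gammaPDFReal, not_le.mpr hx]
  have hle : x - 1 ≤ x * exp ((b - r) * (x - 1)) := by
    rcases le_or_gt x 1 with hx1 | hx1
    · nlinarith [exp_pos ((b - r) * (x - 1))]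
    · nlinarith [one_le_exp (mul_nonneg (sub_nonneg.mpr hrb) (sub_nonneg.mpr hx1.le))]
  have hexp : exp ((b - r) * (x - 1)) = exp (r - b) * exp ((b - r) * x) := by
    rw [← exp_add]; ring_nf
  calc gammaPDFReal r b x * (x - 1)
      ≤ gammaPDFReal r b x * (x * exp ((b - r) * (x - 1))) := by
        gcongr
        exact gammaPDFReal_nonneg hr hb x
    _ = (b / r) ^ r * exp (r - b) * (x * gammaPDFReal r r x) := by
        rw [hexp]
        linear_combination (x * exp (r - b)) * gammaPDFReal_mul_exp r hb.le hr x
    _ = (b / r) ^ r * exp (r - b) * gammaPDFReal (r + 1) r x := by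
        rw [mul_gammaPDFReal hr hr, div_self hr.ne', one_mul]

theorem lintegral_Ioi_gammaMeasure_Ioi_le {r b : ℝ} (hr : 0 < r) (hrb : r ≤ b) :
    ∫⁻ x in Ioi 1, gammaMeasure r b (Ioi x) ≤ ENNReal.ofReal ((b / r) ^ r * exp (r - b)) := by
  have hb : 0 < b := hr.trans_le hrb
  rw [lintegral_measure_Ioi_eq_lintegral_ofReal_sub, gammaMeasure,
    lintegral_withDensity_eq_lintegral_mul _ (f := gammaPDF r b)
      (measurable_gammaPDFReal r b).ennreal_ofReal (by fun_prop)]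
  calc ∫⁻ x, (gammaPDF r b * fun y => ENNReal.ofReal (y - 1)) x
      ≤ ∫⁻ x, ENNReal.ofReal ((b / r) ^ r * exp (r - b)) * gammaPDF (r + 1) r x := by
        refine lintegral_mono fun x => ?_
        simp only [Pi.mul_apply, gammaPDF]
        rw [← ENNReal.ofReal_mul (gammaPDFReal_nonneg hr hb x),
          ← ENNReal.ofReal_mul (by positivity)]
        exact ENNReal.ofReal_le_ofReal (gammaPDFReal_mul_sub_one_le hr hrb x)
    _ = ENNReal.ofReal ((b / r) ^ r * exp (r - b)) := by
        rw [lintegral_const_mul' _ _ ENNReal.ofReal_ne_top,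
          lintegral_gammaPDF_eq_one (by linarith) hr, mul_one]

/-- For `η ~ Γ(r, rK)` with shape `r > 0`, rate `rK`, `K > 1`, the integrated tail
satisfies `∫₁^∞ P(η > x) dx ≤ e^{r+1} K^r e^{-rK}`. -/
theorem gamma_integrated_tail_bound (r K : ℝ) (hr : 0 < r) (hK : 1 < K) :
    ∫ x in Set.Ioi (1 : ℝ), (gammaMeasure r (r * K) (Set.Ioi x)).toReal
      ≤ Real.exp (r + 1) * K ^ (r : ℝ) * Real.exp (-r * K) := by
  have : IsProbabilityMeasure (gammaMeasure r (r * K)) :=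
    isProbabilityMeasure_gammaMeasure hr (by nlinarith)
  have hanti : Antitone fun x : ℝ => gammaMeasure r (r * K) (Ioi x) :=
    fun _ _ hxy => measure_mono (Ioi_subset_Ioi hxy)
  rw [integral_toReal hanti.measurable.aemeasurable (ae_of_all _ fun _ => measure_lt_top _ _)]
  refine ENNReal.toReal_le_of_le_ofReal (by positivity)
    ((lintegral_Ioi_gammaMeasure_Ioi_le hr (by nlinarith)).trans (ENNReal.ofReal_le_ofReal ?_))
  have hexp : exp (r - r * K) ≤ exp (r + 1) * exp (-r * K) := by
    rw [← exp_add]; exact exp_le_exp.mpr (by linarith)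
  calc (r * K / r) ^ r * exp (r - r * K) ≤ K ^ r * (exp (r + 1) * exp (-r * K)) := by
        rw [mul_div_cancel_left₀ K hr.ne']; gcongr
    _ = exp (r + 1) * K ^ r * exp (-r * K) := by ring
end
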